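/- For each m, the coefficient of q^m in (1/(q;q)_∞) Σ_{n=1}^∞ (-1)^{n+1} q^{n(3n+1)/2} equals R(m), the number of partitions of m with positive rank. -/

import Mathlib

open PowerSeries Finset

noncomputable instance : TopologicalSpace (PowerSeries ℚ) :=
  inferInstanceAs (TopologicalSpace ((Unit →₀ ℕ) → ℚ))

/-- The rank of a partition: largest part minus number of parts. -/
def rank {n : ℕ} (P : n.Partition) : ℤ :=
  (P.parts.sup : ℤ) - (Multiset.card P.parts : ℤ)

/-- The crank of a partition. -/
def crank {n : ℕ} (P : n.Partition) : ℤ :=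
  if P.parts.count 1 = 0 then (P.parts.sup : ℤ)
  else ((P.parts.filter (fun x => P.parts.count 1 < x)).card : ℤ) - (P.parts.count 1 : ℤ)

/-- The number of partitions of `n`. -/
noncomputable def p (n : ℕ) : ℕ := Nat.card n.Partition

/-- `p` extended to the integers by `0` on negatives. -/
noncomputable def pz (m : ℤ) : ℕ := if 0 ≤ m then p m.toNat else 0

/-- The number of partitions of `n` with non-negative rank. -/
noncomputable def Nrank (n : ℕ) : ℕ := Nat.card {P : n.Partition // 0 ≤ rank P}

/-- The number of partitions of `n` with positive rank. -/
noncomputable def Rrank (n : ℕ) : ℕ := Nat.card {P : n.Partition // 0 < rank P}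

/-- The number of Garden of Eden partitions of `n` (rank at most `-2`). -/
noncomputable def gePart (n : ℕ) : ℕ := Nat.card {P : n.Partition // rank P ≤ -2}

/-- The number of partitions of `n` with non-negative crank. -/
noncomputable def Ccrank (n : ℕ) : ℕ := Nat.card {P : n.Partition // 0 ≤ crank P}

/-- The number of partitions of `n` with positive crank. -/
noncomputable def Dcrank (n : ℕ) : ℕ := Nat.card {P : n.Partition // 0 < crank P}

/-- The number of partitions of `n` in which `k` is the least positive integer that is not a
part and there are more parts greater than `k` than parts less than `k`. -/
noncomputable def Mk (k n : ℕ) : ℕ := Nat.card {P : n.Partition //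
  (∀ i, 1 ≤ i → i < k → (i : ℕ) ∈ P.parts) ∧ (k : ℕ) ∉ P.parts ∧
  (P.parts.filter (fun x => x < k)).card < (P.parts.filter (fun x => k < x)).card}

/-- The number of partitions of `n` with no part divisible by 3. -/
noncomputable def p3 (n : ℕ) : ℕ := Nat.card {P : n.Partition // ∀ x ∈ P.parts, ¬ (3 ∣ x)}

/-- The infinite product `(q;q)_∞` as a formal power series. -/
noncomputable def E : PowerSeries ℚ := ∏' i : ℕ, (1 - (X : PowerSeries ℚ) ^ (i + 1))

/-- The finite product `(q;q)_n` as a formal power series. -/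
noncomputable def qPoch (n : ℕ) : PowerSeries ℚ :=
  ∏ i ∈ range n, (1 - (X : PowerSeries ℚ) ^ (i + 1))

/-!
Dyson's map (remove the first column of the Ferrers diagram, then add a largest part
`#parts + r + 1`) is a bijection from the partitions of `n` of rank at most `r + 2` onto the
partitions of `n + r + 1` of rank at least `r`, so `N(≥r, n + r + 1) + N(≥r + 3, n) = p(n)`.
For `r ≥ 1` the generating function `G_r` of `N(≥r, ·)` therefore satisfies
`G_r = q^(r+1) (P - G_(r+3))` with `P = 1/(q;q)_∞`, and so does
`P S_r` for `S_r = ∑ₙ (-1)ⁿ q^((n+1)(2r+2+3n)/2)`, since `S_r = q^(r+1) (1 - S_(r+3))`.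
Hence `G_r - P S_r = -q^(r+1) (G_(r+3) - P S_(r+3))` is divisible by every power of `q`,
so `G_r = P S_r`; the case `r = 1` is the theorem.
-/

namespace Multiset

lemma sup_mem_of_ne_zero {s : Multiset ℕ} (hs : s ≠ 0) : s.sup ∈ s := by
  obtain ⟨y, hy, hmax⟩ := s.exists_max_image id hs
  rwa [le_antisymm (sup_le.2 hmax) (le_sup hy)]

lemma sum_map_sub_one_add_card {s : Multiset ℕ} (hs : ∀ x ∈ s, 0 < x) :
    (s.map (· - 1)).sum + card s = s.sum := by
  induction s using Multiset.induction with
  | empty => simp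
  | cons a t ih =>
    have := hs a (mem_cons_self a t)
    have := ih fun x hx => hs x (mem_cons_of_mem hx)
    simp only [map_cons, sum_cons, card_cons]
    omega

lemma sum_map_add_one (s : Multiset ℕ) : (s.map (· + 1)).sum = s.sum + card s := by
  simp [sum_map_add]

lemma filter_ne_add_replicate_count (s : Multiset ℕ) (a : ℕ) :
    s.filter (· ≠ a) + replicate (count a s) a = s := by
  simpa only [not_not, filter_eq'] using filter_add_not (· ≠ a) s

lemma map_sub_one_map_add_one {s : Multiset ℕ} (hs : ∀ x ∈ s, 0 < x) :
    (s.map (· - 1)).map (· + 1) = s := by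
  rw [map_map]
  exact (map_congr rfl fun x hx => Nat.sub_add_cancel (hs x hx)).trans (map_id s)

lemma card_erase_sup_add_one {Q : Multiset ℕ} (hQ : Q ≠ 0) :
    card (Q.erase Q.sup) + 1 = card Q :=
  card_erase_add_one (sup_mem_of_ne_zero hQ)

section DysonMap

-- Remove the first column of the Ferrers diagram of `s`, then add a largest part `card s + r + 1`.
def dysonParts (s : Multiset ℕ) (r : ℕ) : Multiset ℕ :=
  (card s + r + 1) ::ₘ (s.filter (· ≠ 1)).map (· - 1)

def dysonPartsInv (Q : Multiset ℕ) (r : ℕ) : Multiset ℕ :=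
  (Q.erase Q.sup).map (· + 1) + replicate (Q.sup - (r + card Q)) 1

variable {s Q : Multiset ℕ} {r : ℕ}

lemma pos_of_mem_dysonParts (hs : ∀ x ∈ s, 0 < x) : ∀ x ∈ dysonParts s r, 0 < x := by
  simp only [dysonParts, mem_cons, mem_map, mem_filter]
  rintro x (rfl | ⟨y, ⟨hy, hne⟩, rfl⟩)
  · omega
  · have := hs y hy
    omega

lemma sum_dysonParts (hs : ∀ x ∈ s, 0 < x) : (dysonParts s r).sum = s.sum + r + 1 := by
  have hsplit := congr_arg (fun t => (sum t, card t)) (filter_ne_add_replicate_count s 1)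
  simp only [sum_add, card_add, sum_replicate, card_replicate, smul_eq_mul, mul_one,
    Prod.mk.injEq] at hsplit
  have := sum_map_sub_one_add_card (s := s.filter (· ≠ 1))
    fun x hx => hs x (mem_of_mem_filter hx)
  rw [dysonParts, sum_cons]
  omega

lemma card_dysonParts : card (dysonParts s r) = card (s.filter (· ≠ 1)) + 1 := by
  simp [dysonParts]

lemma sup_dysonParts (h : s.sup ≤ card s + r + 2) : (dysonParts s r).sup = card s + r + 1 := by
  rw [dysonParts, sup_cons, sup_eq_left, Multiset.sup_le]
  simp only [mem_map, mem_filter]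
  rintro _ ⟨y, ⟨hy, -⟩, rfl⟩
  have := le_sup hy
  omega

lemma pos_of_mem_dysonPartsInv : ∀ x ∈ dysonPartsInv Q r, 0 < x := by
  simp only [dysonPartsInv, mem_add, mem_map, mem_replicate]
  rintro x (⟨y, -, rfl⟩ | ⟨-, rfl⟩) <;> omega

lemma sum_dysonPartsInv (hQ : Q ≠ 0) (h : r + card Q ≤ Q.sup) :
    (dysonPartsInv Q r).sum + (r + 1) = Q.sum := by
  have hsum := sum_erase (sup_mem_of_ne_zero hQ)
  have hcard := card_erase_sup_add_one hQ
  rw [dysonPartsInv, sum_add, sum_map_add_one, sum_replicate, smul_eq_mul]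
  omega

lemma card_dysonPartsInv (hQ : Q ≠ 0) (h : r + card Q ≤ Q.sup) :
    card (dysonPartsInv Q r) + (r + 1) = Q.sup := by
  have := card_erase_sup_add_one hQ
  rw [dysonPartsInv, card_add, card_map, card_replicate]
  omega

lemma sup_dysonPartsInv_le : (dysonPartsInv Q r).sup ≤ Q.sup + 1 := by
  rw [Multiset.sup_le]
  simp only [dysonPartsInv, mem_add, mem_map, mem_replicate]
  rintro _ (⟨y, hy, rfl⟩ | ⟨-, rfl⟩)
  · exact Nat.add_le_add_right (le_sup (mem_of_mem_erase hy)) 1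
  · omega

lemma dysonPartsInv_dysonParts (hs : ∀ x ∈ s, 0 < x) (h : s.sup ≤ card s + r + 2) :
    dysonPartsInv (dysonParts s r) r = s := by
  have hcard := congr_arg card (filter_ne_add_replicate_count s 1)
  rw [card_add, card_replicate] at hcard
  have hcount : (dysonParts s r).sup - (r + card (dysonParts s r)) = count 1 s := by
    rw [sup_dysonParts h, card_dysonParts]
    omega
  have hlift : ((s.filter (· ≠ 1)).map (· - 1)).map (· + 1) = s.filter (· ≠ 1) :=
    map_sub_one_map_add_one fun x hx => hs x (mem_of_mem_filter hx)
  rw [dysonPartsInv, hcount, sup_dysonParts h, dysonParts, erase_cons_head, hlift,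
    filter_ne_add_replicate_count]

lemma dysonParts_dysonPartsInv (hQ : Q ≠ 0) (hpos : ∀ x ∈ Q, 0 < x)
    (h : r + card Q ≤ Q.sup) : dysonParts (dysonPartsInv Q r) r = Q := by
  have hfilter : (dysonPartsInv Q r).filter (· ≠ 1) = (Q.erase Q.sup).map (· + 1) := by
    rw [dysonPartsInv, filter_add, filter_eq_self.2, filter_eq_nil.2, add_zero]
    · simp [mem_replicate]
    · simp only [mem_map]
      rintro _ ⟨y, hy, rfl⟩
      have := hpos y (mem_of_mem_erase hy)
      omega
  have hhead : card (dysonPartsInv Q r) + r + 1 = Q.sup := by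
    have := card_dysonPartsInv hQ h
    omega
  rw [dysonParts, hfilter, map_map]
  simp only [Function.comp_def, Nat.add_sub_cancel, map_id', hhead]
  exact cons_erase (sup_mem_of_ne_zero hQ)

end DysonMap

end Multiset

lemma Nat.card_subtype_add_card_subtype_not {α : Type*} [Finite α] (P : α → Prop) :
    Nat.card {x // P x} + Nat.card {x // ¬P x} = Nat.card α :=
  Set.ncard_add_ncard_compl {x | P x}

lemma Nat.Partition.parts_ne_zero {n : ℕ} (P : (n + 1).Partition) : P.parts ≠ 0 := fun h => by
  simpa [h] using P.parts_sum

lemma rank_le_iff {n : ℕ} (P : n.Partition) (k : ℕ) :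
    rank P ≤ k ↔ P.parts.sup ≤ Multiset.card P.parts + k := by
  unfold rank
  omega

lemma le_rank_iff {n : ℕ} (P : n.Partition) (k : ℕ) :
    k ≤ rank P ↔ k + Multiset.card P.parts ≤ P.parts.sup := by
  unfold rank
  omega

noncomputable def numRankGe (r n : ℕ) : ℕ := Nat.card {P : n.Partition // r ≤ rank P}

open Multiset in
def dysonEquiv (r n : ℕ) :
    {μ : n.Partition // rank μ ≤ (r + 2 : ℕ)} ≃
      {P : (n + r + 1).Partition // r ≤ rank P} where
  toFun μ :=
    ⟨⟨dysonParts μ.1.parts r, fun hx => pos_of_mem_dysonParts (fun _ => μ.1.parts_pos) _ hx,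
        by rw [sum_dysonParts (fun _ => μ.1.parts_pos), μ.1.parts_sum]⟩, by
      have hsup := (rank_le_iff _ _).1 μ.2
      have := card_le_card (filter_le (· ≠ 1) μ.1.parts)
      rw [le_rank_iff]
      dsimp only
      rw [sup_dysonParts hsup, card_dysonParts]
      omega⟩
  invFun P :=
    have hQ := P.1.parts_ne_zero
    have hrank := (le_rank_iff _ _).1 P.2
    ⟨⟨dysonPartsInv P.1.parts r, fun hx => pos_of_mem_dysonPartsInv _ hx, by
        have := sum_dysonPartsInv hQ hrank
        rw [P.1.parts_sum] at this
        omega⟩, by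
      have := card_dysonPartsInv hQ hrank
      have : (dysonPartsInv P.1.parts r).sup ≤ P.1.parts.sup + 1 := sup_dysonPartsInv_le
      rw [rank_le_iff]
      dsimp only
      omega⟩
  left_inv μ := Subtype.ext <| Nat.Partition.ext <|
    dysonPartsInv_dysonParts (fun _ => μ.1.parts_pos) ((rank_le_iff _ _).1 μ.2)
  right_inv P := Subtype.ext <| Nat.Partition.ext <|
    dysonParts_dysonPartsInv P.1.parts_ne_zero (fun _ => P.1.parts_pos) ((le_rank_iff _ _).1 P.2)

theorem numRankGe_add_numRankGe (r n : ℕ) :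
    numRankGe r (n + r + 1) + numRankGe (r + 3) n = p n := by
  have hcompl : {μ : n.Partition // ¬rank μ ≤ (r + 2 : ℕ)} ≃
      {μ : n.Partition // (r + 3 : ℕ) ≤ rank μ} :=
    Equiv.subtypeEquivRight fun μ => by push_cast; omega
  rw [numRankGe, numRankGe, ← Nat.card_congr (dysonEquiv r n), ← Nat.card_congr hcompl, p,
    Nat.card_subtype_add_card_subtype_not]

lemma numRankGe_eq_zero {r n : ℕ} (hr : 1 ≤ r) (hn : n ≤ r) : numRankGe r n = 0 := by
  rw [numRankGe, Nat.card_eq_zero]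
  left
  refine ⟨fun ⟨P, hP⟩ => ?_⟩
  rw [le_rank_iff] at hP
  rcases eq_or_ne P.parts 0 with h0 | h0
  · simp only [h0, Multiset.card_zero, Multiset.sup_zero, bot_eq_zero', add_zero] at hP
    omega
  · have := Multiset.le_sum_of_mem (Multiset.sup_mem_of_ne_zero h0)
    have := Multiset.card_pos.2 h0
    rw [P.parts_sum] at *
    omega

lemma Rrank_eq_numRankGe_one (n : ℕ) : Rrank n = numRankGe 1 n :=
  Nat.card_congr <| Equiv.subtypeEquivRight fun P => by push_cast; omega

theorem PowerSeries.eq_zero_of_forall_X_pow_dvd {R : Type*} [Semiring R] {φ : R⟦X⟧}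
    (h : ∀ n, X ^ n ∣ φ) : φ = 0 :=
  ext fun n => X_pow_dvd_iff.1 (h (n + 1)) n n.lt_succ_self

-- The topology on `PowerSeries ℚ` fixed above is definitionally `PowerSeries.WithPiTopology`'s.
instance : T2Space (PowerSeries ℚ) := PowerSeries.WithPiTopology.instT2Space ℚ

instance : IsTopologicalRing (PowerSeries ℚ) :=
  PowerSeries.WithPiTopology.instIsTopologicalRing ℚ

noncomputable def partitionSeries : PowerSeries ℚ := mk fun n => (p n : ℚ)

theorem E_mul_partitionSeries : E * partitionSeries = 1 := by
  have hE : HasProd (fun i => 1 - (X : ℚ⟦X⟧) ^ (i + 1)) E :=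
    (PowerSeries.WithPiTopology.hasProd_one_sub_X_pow ℚ).multipliable.hasProd
  have hP : HasProd (fun i => ∑' j, (X : ℚ⟦X⟧) ^ ((i + 1) * j)) partitionSeries := by
    have hp :
        partitionSeries = mk fun n => (#(Nat.Partition.restricted n fun _ => True) : ℚ) := by
      ext n
      simp [partitionSeries, p, Nat.Partition.restricted, Nat.card_eq_fintype_card]
    rw [hp]
    exact Nat.Partition.hasProd_powerSeriesMk_card_restricted ℚ _
  have hfactor : (fun i => (1 - (X : ℚ⟦X⟧) ^ (i + 1)) * ∑' j, (X : ℚ⟦X⟧) ^ ((i + 1) * j)) =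
      fun _ => 1 := by
    ext1 i
    simp_rw [pow_mul]
    exact PowerSeries.WithPiTopology.one_sub_mul_tsum_pow_of_constantCoeff_eq_zero (by simp)
  exact (hfactor ▸ hE.mul hP).unique hasProd_one

theorem E_inv : E⁻¹ = partitionSeries := by
  have hE : constantCoeff E ≠ 0 := fun h => by
    simpa [h] using congr_arg constantCoeff E_mul_partitionSeries
  rw [PowerSeries.inv_eq_iff_mul_eq_one hE, mul_comm, E_mul_partitionSeries]

noncomputable def rankGeSeries (r : ℕ) : PowerSeries ℚ := mk fun n => (numRankGe r n : ℚ)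

theorem rankGeSeries_eq {r : ℕ} (hr : 1 ≤ r) :
    rankGeSeries r = X ^ (r + 1) * (partitionSeries - rankGeSeries (r + 3)) := by
  ext m
  rw [coeff_X_pow_mul']
  split_ifs with h
  · obtain ⟨n, rfl⟩ : ∃ n, m = n + r + 1 := ⟨m - (r + 1), by omega⟩
    rw [show n + r + 1 - (r + 1) = n by omega, map_sub]
    simp only [rankGeSeries, partitionSeries, coeff_mk, ← numRankGe_add_numRankGe r n]
    push_cast
    ring
  · simp only [rankGeSeries, coeff_mk, numRankGe_eq_zero hr (show m ≤ r by omega), Nat.cast_zero]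

def dysonExponent : ℕ → ℕ → ℕ
  | r, 0 => r + 1
  | r, n + 1 => r + 1 + dysonExponent (r + 3) n

lemma le_dysonExponent (r n : ℕ) : n ≤ dysonExponent r n := by
  induction n generalizing r with
  | zero => exact Nat.zero_le _
  | succ n ih => have := ih (r + 3); rw [dysonExponent]; omega

lemma two_mul_dysonExponent (r n : ℕ) :
    2 * dysonExponent r n = (n + 1) * (2 * r + 2 + 3 * n) := by
  induction n generalizing r with
  | zero => rw [dysonExponent]; ring
  | succ n ih => rw [dysonExponent, mul_add, ih]; ring

lemma dysonExponent_one (n : ℕ) : dysonExponent 1 n = (n + 1) * (3 * (n + 1) + 1) / 2 := by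
  have h : (n + 1) * (3 * (n + 1) + 1) = 2 * dysonExponent 1 n := by
    rw [two_mul_dysonExponent]; ring
  rw [h, Nat.mul_div_cancel_left _ two_pos]

noncomputable def dysonSeries (r : ℕ) : PowerSeries ℚ :=
  ∑' n, (-1 : ℚ) ^ n • (X : PowerSeries ℚ) ^ dysonExponent r n

lemma summable_dysonSeries (r : ℕ) :
    Summable fun n => (-1 : ℚ) ^ n • (X : PowerSeries ℚ) ^ dysonExponent r n := by
  refine PowerSeries.WithPiTopology.summable_of_tendsto_order_atTop_nhds_top ℚ
    (ENat.tendsto_nhds_top_iff_natCast_lt.2 fun N =>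
      Filter.eventually_atTop.2 ⟨N + 1, fun n hn => ?_⟩)
  calc (N : ℕ∞) < dysonExponent r n := by have := le_dysonExponent r n; norm_cast; omega
    _ = order ((X : PowerSeries ℚ) ^ dysonExponent r n) := (order_X_pow _).symm
    _ ≤ _ := le_order_smul

theorem dysonSeries_eq (r : ℕ) : dysonSeries r = X ^ (r + 1) * (1 - dysonSeries (r + 3)) := by
  calc dysonSeries r = X ^ (r + 1) + ∑' n, X ^ (r + 1) *
        -((-1 : ℚ) ^ n • (X : PowerSeries ℚ) ^ dysonExponent (r + 3) n) := by
        rw [dysonSeries, (summable_dysonSeries r).tsum_eq_zero_add]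
        simp [dysonExponent, pow_succ, pow_add]
    _ = X ^ (r + 1) * (1 - dysonSeries (r + 3)) := by
        rw [(summable_dysonSeries (r + 3)).neg.tsum_mul_left, tsum_neg, dysonSeries]
        ring

theorem rankGeSeries_eq_mul {r : ℕ} (hr : 1 ≤ r) :
    rankGeSeries r = partitionSeries * dysonSeries r := by
  suffices h : ∀ k r, 1 ≤ r → X ^ k ∣ rankGeSeries r - partitionSeries * dysonSeries r from
    sub_eq_zero.1 (PowerSeries.eq_zero_of_forall_X_pow_dvd fun k => h k r hr)
  intro k
  induction k with
  | zero => simp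
  | succ k ih =>
    intro r hr
    have hrec : rankGeSeries r - partitionSeries * dysonSeries r =
        -X ^ (r + 1) * (rankGeSeries (r + 3) - partitionSeries * dysonSeries (r + 3)) := by
      rw [rankGeSeries_eq hr, dysonSeries_eq]
      ring
    rw [hrec, pow_succ']
    exact mul_dvd_mul (dvd_neg.2 (dvd_pow_self X r.succ_ne_zero)) (ih (r + 3) (by omega))

theorem stmt7 (m : ℕ) :
    (PowerSeries.coeff (R := ℚ) m)
        (E⁻¹ * ∑' n : ℕ,
          ((-1 : ℚ) ^ n) • (X : PowerSeries ℚ) ^ ((n + 1) * (3 * (n + 1) + 1) / 2)) =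
      (Rrank m : ℚ) := by
  simp only [← dysonExponent_one]
  rw [E_inv, ← dysonSeries, ← rankGeSeries_eq_mul le_rfl, rankGeSeries, coeff_mk,
    Rrank_eq_numRankGe_one]
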